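/- Let L be a commutative ring, f, g ∈ L, let (φ, ψ) be a matrix factorization of f of size n and (φ', ψ') a matrix factorization of g of size m over L. Define the 2nm × 2nm block matrices E'' = [[ψ ⊗ 1ₘ, −(1ₙ ⊗ ψ')], [1ₙ ⊗ φ', φ ⊗ 1ₘ]] and F'' = [[φ ⊗ 1ₘ, 1ₙ ⊗ ψ'], [−(1ₙ ⊗ φ'), ψ ⊗ 1ₘ]]. Then E''·F'' = (f + g)·I and F''·E'' = (f + g)·I; that is, the second variant of the Yoshino tensor product is a matrix factorization of f + g of size 2nm. -/

import Mathlib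

/-!
Write `P = ψ ⊗ 1`, `S = φ ⊗ 1`, `Q = 1 ⊗ ψ'`, `T = 1 ⊗ φ'`. Then `(P, S)` and `(Q, T)` are
matrix factorizations of `f` and `g`, and every factor built on the left tensor slot commutes
with every factor built on the right one. Multiplying out the 2 × 2 block matrices, the
diagonal blocks are `f • 1 + g • 1` and the off-diagonal blocks are commutators, hence zero.
-/

open Matrix Kronecker

section

variable {R ι κ : Type*} [CommRing R] [Fintype ι] [DecidableEq ι] [Fintype κ] [DecidableEq κ]

def IsMatrixFactorization (f : R) (φ ψ : Matrix ι ι R) : Prop :=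
  φ * ψ = f • 1 ∧ ψ * φ = f • 1

namespace IsMatrixFactorization

variable {f g : R}

theorem symm {φ ψ : Matrix ι ι R} (h : IsMatrixFactorization f φ ψ) :
    IsMatrixFactorization f ψ φ :=
  ⟨h.2, h.1⟩

theorem neg {φ ψ : Matrix ι ι R} (h : IsMatrixFactorization f φ ψ) :
    IsMatrixFactorization f (-φ) (-ψ) := by
  simpa only [IsMatrixFactorization, neg_mul_neg] using h

theorem kronecker_one {φ ψ : Matrix ι ι R} (h : IsMatrixFactorization f φ ψ) :
    IsMatrixFactorization f (φ ⊗ₖ (1 : Matrix κ κ R)) (ψ ⊗ₖ 1) := by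
  simp only [IsMatrixFactorization, ← mul_kronecker_mul, h.1, h.2, mul_one, smul_kronecker,
    one_kronecker_one, and_self]

theorem one_kronecker {φ ψ : Matrix κ κ R} (h : IsMatrixFactorization f φ ψ) :
    IsMatrixFactorization f ((1 : Matrix ι ι R) ⊗ₖ φ) (1 ⊗ₖ ψ) := by
  simp only [IsMatrixFactorization, ← mul_kronecker_mul, h.1, h.2, mul_one, kronecker_smul,
    one_kronecker_one, and_self]

theorem fromBlocks_mul_fromBlocks {P Q S T : Matrix ι ι R}
    (hPS : IsMatrixFactorization f P S) (hQT : IsMatrixFactorization g Q T)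
    (hPQ : Commute P Q) (hTS : Commute T S) :
    fromBlocks P (-Q) T S * fromBlocks S Q (-T) P = (f + g) • 1 := by
  rw [fromBlocks_multiply, ← fromBlocks_one, fromBlocks_smul, add_smul, hPS.1, hPS.2,
    neg_mul_neg, hQT.1, hQT.2, mul_neg, neg_mul, hPQ.eq, hTS.eq, add_neg_cancel, add_neg_cancel,
    smul_zero, add_comm (g • 1)]

end IsMatrixFactorization

theorem commute_kronecker_one_one_kronecker (A : Matrix ι ι R) (B : Matrix κ κ R) :
    Commute (A ⊗ₖ (1 : Matrix κ κ R)) ((1 : Matrix ι ι R) ⊗ₖ B) := by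
  simp only [Commute, SemiconjBy, ← mul_kronecker_mul, mul_one, one_mul]

end

/-- The second variant of the Yoshino tensor product of a matrix factorization of `f`
and a matrix factorization of `g` is a matrix factorization of `f + g`. -/
theorem yoshino_tensor_product_second_variant_is_matrix_factorization
    {L : Type*} [CommRing L] (f g : L) (n m : ℕ)
    (φ ψ : Matrix (Fin n) (Fin n) L) (φ' ψ' : Matrix (Fin m) (Fin m) L)
    (hφψ : φ * ψ = f • (1 : Matrix (Fin n) (Fin n) L))
    (hψφ : ψ * φ = f • (1 : Matrix (Fin n) (Fin n) L))
    (hφψ' : φ' * ψ' = g • (1 : Matrix (Fin m) (Fin m) L))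
    (hψφ' : ψ' * φ' = g • (1 : Matrix (Fin m) (Fin m) L)) :
    Matrix.fromBlocks (ψ ⊗ₖ (1 : Matrix (Fin m) (Fin m) L)) (-((1 : Matrix (Fin n) (Fin n) L) ⊗ₖ ψ'))
        ((1 : Matrix (Fin n) (Fin n) L) ⊗ₖ φ') (φ ⊗ₖ (1 : Matrix (Fin m) (Fin m) L)) *
      Matrix.fromBlocks (φ ⊗ₖ (1 : Matrix (Fin m) (Fin m) L)) ((1 : Matrix (Fin n) (Fin n) L) ⊗ₖ ψ')
        (-((1 : Matrix (Fin n) (Fin n) L) ⊗ₖ φ')) (ψ ⊗ₖ (1 : Matrix (Fin m) (Fin m) L)) =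
      (f + g) • 1 ∧
    Matrix.fromBlocks (φ ⊗ₖ (1 : Matrix (Fin m) (Fin m) L)) ((1 : Matrix (Fin n) (Fin n) L) ⊗ₖ ψ')
        (-((1 : Matrix (Fin n) (Fin n) L) ⊗ₖ φ')) (ψ ⊗ₖ (1 : Matrix (Fin m) (Fin m) L)) *
      Matrix.fromBlocks (ψ ⊗ₖ (1 : Matrix (Fin m) (Fin m) L)) (-((1 : Matrix (Fin n) (Fin n) L) ⊗ₖ ψ'))
        ((1 : Matrix (Fin n) (Fin n) L) ⊗ₖ φ') (φ ⊗ₖ (1 : Matrix (Fin m) (Fin m) L)) =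
      (f + g) • 1 := by
  have hf : IsMatrixFactorization f (ψ ⊗ₖ (1 : Matrix (Fin m) (Fin m) L)) (φ ⊗ₖ 1) :=
    IsMatrixFactorization.kronecker_one ⟨hψφ, hφψ⟩
  have hg : IsMatrixFactorization g ((1 : Matrix (Fin n) (Fin n) L) ⊗ₖ ψ') (1 ⊗ₖ φ') :=
    IsMatrixFactorization.one_kronecker ⟨hψφ', hφψ'⟩
  constructor
  · exact hf.fromBlocks_mul_fromBlocks hg (commute_kronecker_one_one_kronecker _ _)
      (commute_kronecker_one_one_kronecker _ _).symm
  -- the second product is the first one with `P, S` swapped and `Q, T` negated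
  · simpa only [neg_neg] using hf.symm.fromBlocks_mul_fromBlocks hg.neg
      (commute_kronecker_one_one_kronecker _ _).neg_right
      (commute_kronecker_one_one_kronecker _ _).symm.neg_left
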